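/- For all positive real parameters κ, θ, σ, the function x ↦ x²·π(x) is integrable on [0,∞) and ∫₀^∞ x² · π(x) dx = σ²/(2κ) + θ² + θ · (σ/√(2κ)) · φ(√(2κ)θ/σ) / (1 − Φ(−√(2κ)θ/σ)). -/

import Mathlib

/-!
Substituting `z = c (x - θ)` with `c = √(2κ)/σ` turns the second moment into
`∫_{z > -cθ} (θ + z/c)² φ(z) dz`. Expanding the square leaves the tail integrals of `φ`, `z φ`
and `z² φ` over `(a, ∞)`; since `φ' = -z φ`, the fundamental theorem of calculus evaluates them
as `1 - Φ(a)`, `φ(a)` and `a φ(a) + 1 - Φ(a)`.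
-/

open MeasureTheory Real

/-- The standard normal probability density function φ. -/
noncomputable def stdPhi (x : ℝ) : ℝ := Real.exp (-x ^ 2 / 2) / Real.sqrt (2 * Real.pi)

/-- The standard normal cumulative distribution function Φ. -/
noncomputable def stdCDF (x : ℝ) : ℝ := ∫ u in Set.Iic x, stdPhi u

/-- The stationary density of the reflected Ornstein–Uhlenbeck process. -/
noncomputable def rouPi (κ θ σ x : ℝ) : ℝ :=
  (Real.sqrt (2 * κ) / σ) * stdPhi (Real.sqrt (2 * κ) * (x - θ) / σ) /
    (1 - stdCDF (-(Real.sqrt (2 * κ) * θ / σ)))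

open Set Filter

/- No limit hypothesis is needed: integrability of `f` and `f'` forces `f → 0` at `+∞`. -/
theorem integral_Ioi_of_hasDerivAt_of_integrable {f f' : ℝ → ℝ}
    (hderiv : ∀ x, HasDerivAt f (f' x) x) (hf : Integrable f) (hf' : Integrable f') (a : ℝ) :
    ∫ x in Ioi a, f' x = -f a := by
  have hlim := tendsto_zero_of_hasDerivAt_of_integrableOn_Ioi (a := a) (fun x _ ↦ hderiv x)
    hf'.integrableOn hf.integrableOn
  simpa using integral_Ioi_of_hasDerivAt_of_tendsto' (fun x _ ↦ hderiv x) hf'.integrableOn hlim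

theorem integral_Ioi_comp_sub_right (f : ℝ → ℝ) (a d : ℝ) :
    ∫ x in Ioi a, f (x - d) = ∫ y in Ioi (a - d), f y := by
  have h := (measurePreserving_sub_right volume d).setIntegral_preimage_emb
    (MeasurableEquiv.subRight d).measurableEmbedding f (Ioi (a - d))
  rwa [show (· - d) ⁻¹' Ioi (a - d) = Ioi a by ext; simp] at h

theorem integral_Ioi_mul_comp_affine (f : ℝ → ℝ) {c : ℝ} (hc : 0 < c) (a θ : ℝ) :
    ∫ x in Ioi a, c * f (c * (x - θ)) = ∫ z in Ioi (c * (a - θ)), f z := by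
  rw [integral_const_mul, integral_Ioi_comp_sub_right (fun y ↦ f (c * y)),
    integral_comp_mul_left_Ioi _ _ hc, smul_eq_mul, mul_inv_cancel_left₀ hc.ne']

theorem stdPhi_eq_gaussianPDFReal : stdPhi = ProbabilityTheory.gaussianPDFReal 0 1 := by
  ext x
  simp [stdPhi, ProbabilityTheory.gaussianPDFReal, div_eq_inv_mul]

theorem stdPhi_pos (x : ℝ) : 0 < stdPhi x := by
  unfold stdPhi; positivity

theorem stdPhi_neg (x : ℝ) : stdPhi (-x) = stdPhi x := by
  simp [stdPhi]

theorem hasDerivAt_stdPhi (x : ℝ) : HasDerivAt stdPhi (-x * stdPhi x) x := by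
  have hexponent : HasDerivAt (fun y : ℝ ↦ -y ^ 2 / 2) (-x) x :=
    ((hasDerivAt_pow 2 x).fun_neg.div_const 2).congr_deriv (by ring)
  exact (hexponent.exp.div_const (√(2 * π))).congr_deriv (by rw [stdPhi]; ring)

theorem integrable_pow_mul_stdPhi (n : ℕ) : Integrable fun x ↦ x ^ n * stdPhi x := by
  have h := (integrable_rpow_mul_exp_neg_mul_sq (b := 1 / 2) (by norm_num)
    (s := n) (by linarith [n.cast_nonneg (α := ℝ)])).div_const (√(2 * π))
  refine h.congr (ae_of_all _ fun x ↦ ?_)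
  simp only [stdPhi, rpow_natCast]
  ring_nf

theorem integrable_stdPhi : Integrable stdPhi := by
  simpa using integrable_pow_mul_stdPhi 0

theorem integral_stdPhi : ∫ x, stdPhi x = 1 := by
  rw [stdPhi_eq_gaussianPDFReal]
  exact ProbabilityTheory.integral_gaussianPDFReal_eq_one 0 one_ne_zero

theorem integral_Ioi_stdPhi (a : ℝ) : ∫ x in Ioi a, stdPhi x = 1 - stdCDF a := by
  rw [stdCDF, ← integral_stdPhi, ← intervalIntegral.integral_Iic_add_Ioi
    integrable_stdPhi.integrableOn integrable_stdPhi.integrableOn]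
  ring

theorem stdCDF_lt_one (a : ℝ) : stdCDF a < 1 := by
  have hpos : 0 < ∫ x in Ioi a, stdPhi x :=
    setIntegral_pos_iff_support_of_nonneg_ae (ae_of_all _ fun x ↦ (stdPhi_pos x).le)
      integrable_stdPhi.integrableOn |>.mpr (by simp [Function.support, (stdPhi_pos _).ne'])
  linarith [integral_Ioi_stdPhi a]

theorem integral_Ioi_mul_stdPhi (a : ℝ) : ∫ x in Ioi a, x * stdPhi x = stdPhi a := by
  have h := integral_Ioi_of_hasDerivAt_of_integrable (f := fun x ↦ -stdPhi x)
    (fun x ↦ by simpa using (hasDerivAt_stdPhi x).fun_neg) integrable_stdPhi.neg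
    (by simpa using integrable_pow_mul_stdPhi 1) a
  simpa using h

theorem integral_Ioi_sq_mul_stdPhi (a : ℝ) :
    ∫ x in Ioi a, x ^ 2 * stdPhi x = a * stdPhi a + (1 - stdCDF a) := by
  have hderiv (x : ℝ) : HasDerivAt (fun x ↦ -(x * stdPhi x)) (x ^ 2 * stdPhi x - stdPhi x) x :=
    ((hasDerivAt_id' x).fun_mul (hasDerivAt_stdPhi x)).fun_neg.congr_deriv (by ring)
  have h := integral_Ioi_of_hasDerivAt_of_integrable hderiv
    (by simpa using (integrable_pow_mul_stdPhi 1).neg)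
    ((integrable_pow_mul_stdPhi 2).sub integrable_stdPhi) a
  rw [integral_sub (integrable_pow_mul_stdPhi 2).integrableOn integrable_stdPhi.integrableOn,
    integral_Ioi_stdPhi] at h
  linarith

theorem integrable_sq_mul_affine_stdPhi {c : ℝ} (hc : 0 < c) (θ : ℝ) :
    Integrable fun x ↦ x ^ 2 * (c * stdPhi (c * (x - θ))) := by
  have hg : Integrable fun z ↦
      θ ^ 2 * stdPhi z + 2 * θ / c * (z ^ 1 * stdPhi z) + 1 / c ^ 2 * (z ^ 2 * stdPhi z) :=
    ((integrable_stdPhi.const_mul _).add ((integrable_pow_mul_stdPhi 1).const_mul _)).add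
      ((integrable_pow_mul_stdPhi 2).const_mul _)
  refine (((hg.comp_mul_left' hc.ne').comp_sub_right θ).const_mul c).congr
    (ae_of_all _ fun x ↦ ?_)
  field_simp
  ring

theorem integral_Ioi_sq_mul_affine_stdPhi {c : ℝ} (hc : 0 < c) (a θ : ℝ) :
    ∫ x in Ioi a, x ^ 2 * (c * stdPhi (c * (x - θ))) =
      (θ ^ 2 + 1 / c ^ 2) * (1 - stdCDF (c * (a - θ))) + (θ + a) / c * stdPhi (c * (a - θ)) := by
  let g : ℝ → ℝ := fun z ↦
    θ ^ 2 * stdPhi z + 2 * θ / c * (z * stdPhi z) + 1 / c ^ 2 * (z ^ 2 * stdPhi z)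
  have hsubst (x : ℝ) : x ^ 2 * (c * stdPhi (c * (x - θ))) = c * g (c * (x - θ)) := by
    simp only [g]
    field_simp
    ring
  have h0 := integrable_stdPhi.const_mul (θ ^ 2)
  have h1 : Integrable fun z ↦ 2 * θ / c * (z * stdPhi z) := by
    simpa using (integrable_pow_mul_stdPhi 1).const_mul (2 * θ / c)
  have h2 := (integrable_pow_mul_stdPhi 2).const_mul (1 / c ^ 2)
  simp_rw [hsubst]
  rw [integral_Ioi_mul_comp_affine g hc,
    integral_add (h0.fun_add h1).integrableOn h2.integrableOn,
    integral_add h0.integrableOn h1.integrableOn, integral_const_mul, integral_const_mul,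
    integral_const_mul, integral_Ioi_stdPhi, integral_Ioi_mul_stdPhi, integral_Ioi_sq_mul_stdPhi]
  field_simp
  ring

theorem rouPi_second_moment_general (κ θ σ : ℝ) (hκ : 0 < κ) (hσ : 0 < σ) :
    MeasureTheory.IntegrableOn (fun x : ℝ => x ^ 2 * rouPi κ θ σ x) (Set.Ioi 0) ∧
      (∫ x in Set.Ioi (0 : ℝ), x ^ 2 * rouPi κ θ σ x) =
        σ ^ 2 / (2 * κ) + θ ^ 2 +
          θ * ((σ / Real.sqrt (2 * κ)) * stdPhi (Real.sqrt (2 * κ) * θ / σ) /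
            (1 - stdCDF (-(Real.sqrt (2 * κ) * θ / σ)))) := by
  set c := √(2 * κ) / σ with hc_def
  have hc : 0 < c := by positivity
  have hcθ : √(2 * κ) * θ / σ = c * θ := mul_div_right_comm _ _ _
  rw [hcθ]
  have hT : 0 < 1 - stdCDF (-(c * θ)) := sub_pos.mpr (stdCDF_lt_one _)
  have hrou (x : ℝ) : x ^ 2 * rouPi κ θ σ x =
      x ^ 2 * (c * stdPhi (c * (x - θ))) / (1 - stdCDF (-(c * θ))) := by
    rw [rouPi, hcθ, mul_div_right_comm _ (x - θ), ← hc_def]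
    ring
  simp_rw [hrou]
  refine ⟨((integrable_sq_mul_affine_stdPhi hc θ).div_const _).integrableOn, ?_⟩
  rw [integral_div, integral_Ioi_sq_mul_affine_stdPhi hc, zero_sub, mul_neg, stdPhi_neg]
  have hc2 : σ ^ 2 / (2 * κ) = 1 / c ^ 2 := by
    rw [hc_def, div_pow, sq_sqrt (by positivity), one_div_div]
  have hc_inv : σ / √(2 * κ) = 1 / c := by rw [hc_def, one_div_div]
  rw [hc2, hc_inv]
  generalize 1 - stdCDF (-(c * θ)) = T at hT ⊢
  field_simp
  ring

/-- For all positive parameters κ, θ, σ, the second stationary moment: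
x ↦ x²·π(x) is integrable on [0,∞) and
∫₀^∞ x² π(x) dx = σ²/(2κ) + θ² + θ (σ/√(2κ)) φ(√(2κ)θ/σ)/(1 − Φ(−√(2κ)θ/σ)). -/
theorem rouPi_second_moment (κ θ σ : ℝ) (hκ : 0 < κ) (hθ : 0 < θ) (hσ : 0 < σ) :
    MeasureTheory.IntegrableOn (fun x : ℝ => x ^ 2 * rouPi κ θ σ x) (Set.Ioi 0) ∧
      (∫ x in Set.Ioi (0 : ℝ), x ^ 2 * rouPi κ θ σ x) =
        σ ^ 2 / (2 * κ) + θ ^ 2 +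
          θ * ((σ / Real.sqrt (2 * κ)) * stdPhi (Real.sqrt (2 * κ) * θ / σ) /
            (1 - stdCDF (-(Real.sqrt (2 * κ) * θ / σ)))) :=
  rouPi_second_moment_general κ θ σ hκ hσ
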